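/- The Hemlock algorithm is deadlock-free: in every execution of the Hemlock transition-system model, if at some state some thread is in the entry code for a lock L, then eventually some thread enters the critical section protected by L. (This follows from lockout-freedom, which is a stronger property.) -/

import Mathlib

namespace Hemlock

/-- Program counter locations of a thread in the Hemlock algorithm. -/
inductive PC where
  | remainder  -- in the remainder section
  | entrySpin  -- in the entry code, spinning on the predecessor's Grant field
  | crit       -- in the critical section
  | exitCAS    -- in the exit code, about to perform the CAS on Tail
  | exitDoor   -- in the exit code, about to perform the exit doorstep (write Grant self := some L)
  | exitSpin   -- in the exit code, spinning on its own Grant field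
deriving DecidableEq

/-- A global state of the Hemlock transition system. -/
structure St (Thread Lock : Type) where
  Tail : Lock → Option Thread        -- the Tail field of each lock
  Grant : Thread → Option Lock       -- the Grant field of each thread
  pc : Thread → PC                   -- program counter of each thread
  lk : Thread → Option Lock          -- the lock currently being acquired/released by each thread
  pred : Thread → Option Thread      -- value returned by each thread's last SWAP

variable {Thread Lock : Type} [DecidableEq Thread] [DecidableEq Lock]

/-- The initial state: all Tail and Grant fields are none, all threads in the remainder. -/
def initSt : St Thread Lock :=
  ⟨fun _ => none, fun _ => none, fun _ => .remainder, fun _ => none, fun _ => none⟩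

/-- One atomic transition of thread `t`. -/
inductive Step (t : Thread) : St Thread Lock → St Thread Lock → Prop where
  /-- a step inside the remainder section -/
  | remainderStay (s : St Thread Lock) (h : s.pc t = .remainder) :
      Step t s s
  /-- the entry doorstep for lock `L`: atomic SWAP on `Tail L`, storing the old value in `pred`;
      if the SWAP returned `none` the thread enters the critical section, else it spins -/
  | doorstep (s : St Thread Lock) (L : Lock) (h : s.pc t = .remainder) :
      Step t s ⟨Function.update s.Tail L (some t), s.Grant,
        Function.update s.pc t (if s.Tail L = none then .crit else .entrySpin),
        Function.update s.lk t (some L),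
        Function.update s.pred t (s.Tail L)⟩
  /-- entry-code busy-wait loop: read `Grant p`; it is not yet `some L`, keep spinning -/
  | spinWait (s : St Thread Lock) (p : Thread) (L : Lock)
      (h : s.pc t = .entrySpin) (hp : s.pred t = some p) (hl : s.lk t = some L)
      (hg : s.Grant p ≠ some L) :
      Step t s s
  /-- entry-code busy-wait loop: read `Grant p = some L`; write `Grant p := none`
      and enter the critical section -/
  | spinAcquire (s : St Thread Lock) (p : Thread) (L : Lock)
      (h : s.pc t = .entrySpin) (hp : s.pred t = some p) (hl : s.lk t = some L)
      (hg : s.Grant p = some L) :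
      Step t s ⟨s.Tail, Function.update s.Grant p none,
        Function.update s.pc t .crit, s.lk, s.pred⟩
  /-- a step inside the critical section -/
  | critStay (s : St Thread Lock) (h : s.pc t = .crit) :
      Step t s s
  /-- leave the critical section and begin the exit code -/
  | exitStart (s : St Thread Lock) (h : s.pc t = .crit) :
      Step t s ⟨s.Tail, s.Grant, Function.update s.pc t .exitCAS, s.lk, s.pred⟩
  /-- successful CAS: `Tail L = some self`, so set `Tail L := none` and
      complete the exit code, returning to the remainder section -/
  | casSucc (s : St Thread Lock) (L : Lock)
      (h : s.pc t = .exitCAS) (hl : s.lk t = some L) (ht : s.Tail L = some t) :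
      Step t s ⟨Function.update s.Tail L none, s.Grant,
        Function.update s.pc t .remainder, Function.update s.lk t none, s.pred⟩
  /-- failed CAS: `Tail L ≠ some self`; proceed to the exit doorstep -/
  | casFail (s : St Thread Lock) (L : Lock)
      (h : s.pc t = .exitCAS) (hl : s.lk t = some L) (ht : s.Tail L ≠ some t) :
      Step t s ⟨s.Tail, s.Grant, Function.update s.pc t .exitDoor, s.lk, s.pred⟩
  /-- the exit doorstep: write `Grant self := some L` and start spinning on `Grant self` -/
  | exitDoorstep (s : St Thread Lock) (L : Lock)
      (h : s.pc t = .exitDoor) (hl : s.lk t = some L) :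
      Step t s ⟨s.Tail, Function.update s.Grant t (some L),
        Function.update s.pc t .exitSpin, s.lk, s.pred⟩
  /-- exit-code busy-wait loop: read `Grant self`; it is not yet `none`, keep spinning -/
  | exitSpinWait (s : St Thread Lock) (h : s.pc t = .exitSpin) (hg : s.Grant t ≠ none) :
      Step t s s
  /-- exit-code busy-wait loop: read `Grant self = none`; complete the exit code,
      returning to the remainder section -/
  | exitDone (s : St Thread Lock) (h : s.pc t = .exitSpin) (hg : s.Grant t = none) :
      Step t s ⟨s.Tail, s.Grant, Function.update s.pc t .remainder,
        Function.update s.lk t none, s.pred⟩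

/-- An execution of the Hemlock transition system: an infinite sequence of states starting
    from the initial state, where each step is one transition of the scheduled thread;
    every thread whose program counter is in the entry, exit or critical section eventually
    takes another step, and every thread leaves each critical section after finitely
    many steps. -/
structure Execution (Thread Lock : Type) [DecidableEq Thread] [DecidableEq Lock]
    [Fintype Thread] where
  states : ℕ → St Thread Lock
  sched : ℕ → Thread
  init : states 0 = initSt
  steps : ∀ n, Step (sched n) (states n) (states (n + 1))
  fair : ∀ n t, (states n).pc t ≠ PC.remainder → ∃ m, n ≤ m ∧ sched m = t
  critFinite : ∀ n t, (states n).pc t = PC.crit → ∃ m, n ≤ m ∧ (states m).pc t ≠ PC.crit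

variable [Fintype Thread]

/-- Thread `t` executes the entry doorstep (the SWAP) for lock `L` at time `n`. -/
def doorstepAt (E : Execution Thread Lock) (n : ℕ) (t : Thread) (L : Lock) : Prop :=
  E.sched n = t ∧ (E.states n).pc t = PC.remainder ∧
    (E.states (n + 1)).pc t ≠ PC.remainder ∧ (E.states (n + 1)).lk t = some L

/-- Thread `t` performs the CAS step of the exit code for lock `L` at time `n`
    (successful or not). -/
def casAt (E : Execution Thread Lock) (n : ℕ) (t : Thread) (L : Lock) : Prop :=
  E.sched n = t ∧ (E.states n).pc t = PC.exitCAS ∧ (E.states n).lk t = some L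

/-- Thread `t` performs the exit doorstep (the write `Grant t := some L`) at time `n`. -/
def exitDoorAt (E : Execution Thread Lock) (n : ℕ) (t : Thread) (L : Lock) : Prop :=
  E.sched n = t ∧ (E.states n).pc t = PC.exitDoor ∧ (E.states n).lk t = some L

/-- Thread `t` is in the critical section protected by `L` in state `s`. -/
def inCS (s : St Thread Lock) (t : Thread) (L : Lock) : Prop :=
  s.pc t = PC.crit ∧ s.lk t = some L

/-- Thread `t` is in the entry code for lock `L` in state `s`. -/
def inEntry (s : St Thread Lock) (t : Thread) (L : Lock) : Prop :=
  s.pc t = PC.entrySpin ∧ s.lk t = some L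

/-- Thread `t` enters the critical section protected by `L` at step `m`. -/
def entersCSAt (E : Execution Thread Lock) (m : ℕ) (t : Thread) (L : Lock) : Prop :=
  E.sched m = t ∧ (E.states m).pc t ≠ PC.crit ∧
    (E.states (m + 1)).pc t = PC.crit ∧ (E.states (m + 1)).lk t = some L

/-- Thread `t` completes its critical section protected by `L` at step `k`
    (leaving the critical section and beginning the exit code). -/
def exitsCSAt (E : Execution Thread Lock) (k : ℕ) (t : Thread) (L : Lock) : Prop :=
  E.sched k = t ∧ (E.states k).pc t = PC.crit ∧ (E.states k).lk t = some L ∧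
    (E.states (k + 1)).pc t ≠ PC.crit

/-- Thread `t` completes the exit code for lock `L` at step `k`
    (returning to the remainder section). -/
def completesExitAt (E : Execution Thread Lock) (k : ℕ) (t : Thread) (L : Lock) : Prop :=
  E.sched k = t ∧ (E.states k).lk t = some L ∧
    (E.states k).pc t ≠ PC.remainder ∧ (E.states (k + 1)).pc t = PC.remainder

/-- `m` is the first time at or after `n` at which thread `t` enters the
    critical section protected by `L`. -/
def firstEntryAfter (E : Execution Thread Lock) (n m : ℕ) (t : Thread) (L : Lock) : Prop :=
  n ≤ m ∧ entersCSAt E m t L ∧ ∀ k, n ≤ k → k < m → ¬ entersCSAt E k t L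

/-- At time `n`, thread `T` is spinning in the entry code waiting for `Grant w`
    to become `some L`: its next step reads `Grant w` inside the entry-code
    busy-wait loop with current lock `L` and `pred = some w`. -/
def spinningEntryFor (E : Execution Thread Lock) (n : ℕ) (T w : Thread) (L : Lock) : Prop :=
  (E.states n).pc T = PC.entrySpin ∧ (E.states n).pred T = some w ∧
    (E.states n).lk T = some L

/-- At time `n`, thread `T` is spinning on the word `Grant w`: its next step reads
    `Grant w` inside one of the two busy-wait loops (the entry-code loop with
    `pred = some w`, or the exit-code loop executed by `w` itself). -/
def spinningOn (E : Execution Thread Lock) (n : ℕ) (T w : Thread) : Prop :=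
  ((E.states n).pc T = PC.entrySpin ∧ (E.states n).pred T = some w) ∨
    (T = w ∧ (E.states n).pc T = PC.exitSpin)

/-- Lock `L` is associated with thread `T` at time `n`: `T` has executed the entry
    doorstep for `L` and has not yet completed the exit code for `L`. -/
def associated (E : Execution Thread Lock) (n : ℕ) (T : Thread) (L : Lock) : Prop :=
  ∃ m, m < n ∧ doorstepAt E m T L ∧ ∀ k, m < k → k < n → ¬ completesExitAt E k T L

end Hemlock

/-!
Suppose that from time `n` on no thread is ever in the critical section of `L`. A thread `t`
waiting for `L` spins on `Grant w`, where `w` is the previous `Tail L` returned by its SWAP; an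
invariant of the transition system says that `w` is then busy with `L` and that `Tail L` is no
longer `w`. If `w` waits as well, it did its SWAP before `t` did, so descending along
predecessors (by the time of the last doorstep) we reach a waiting `t` whose predecessor `w` is
in the exit code. Its CAS fails since `Tail L ≠ w`, so `w` writes `Grant w := L`; nobody can
consume this grant without entering the critical section, so fairness makes `t` read it and
enter, a contradiction.
-/

namespace Hemlock

variable {Thread Lock : Type}

structure Invariant (s : St Thread Lock) : Prop where
  pred_ne_none : ∀ t, s.pc t = .entrySpin → s.pred t ≠ none
  grant : ∀ w l, s.Grant w = some l → s.pc w = .exitSpin ∧ s.lk w = some l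
  tail : ∀ l w, s.Tail l = some w → s.pc w ≠ .remainder ∧ s.lk w = some l
  exit_tail : ∀ w l, (s.pc w = .exitDoor ∨ s.pc w = .exitSpin) → s.lk w = some l →
    s.Tail l ≠ some w
  wait_tail : ∀ t w l, s.pc t = .entrySpin → s.pred t = some w → s.lk t = some l →
    s.Tail l ≠ some w
  wait_pred : ∀ t w, s.pc t = .entrySpin → s.pred t = some w →
    s.pc w ≠ .remainder ∧ s.lk w = s.lk t
  pred_inj : ∀ t t' w, s.pc t = .entrySpin → s.pred t = some w → s.pc t' = .entrySpin →
    s.pred t' = some w → t = t'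
  exit_grant : ∀ w t, s.pc w = .exitSpin → s.Grant w = none → s.pc t = .entrySpin →
    s.pred t ≠ some w

theorem Invariant.init : Invariant (initSt : St Thread Lock) := by
  constructor <;> simp [initSt]

variable [DecidableEq Thread] [DecidableEq Lock]

theorem Invariant.step {u : Thread} {s s' : St Thread Lock} (hi : Invariant s)
    (h : Step u s s') : Invariant s' := by
  cases hi
  cases h <;> constructor <;> grind [Function.update_apply]

namespace Step

variable {u t w : Thread} {s s' : St Thread Lock} {L : Lock}

theorem local_of_ne (h : Step u s s') (ht : t ≠ u) :
    s'.pc t = s.pc t ∧ s'.lk t = s.lk t ∧ s'.pred t = s.pred t := by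
  cases h <;> simp [Function.update_of_ne ht]

theorem entrySpin_or_crit (h : Step t s s') (ht : s.pc t = .entrySpin) :
    s'.lk t = s.lk t ∧ (s'.pc t = .entrySpin ∧ s'.pred t = s.pred t ∨ s'.pc t = .crit) := by
  cases h <;> simp_all

theorem crit_of_grant (h : Step t s s') (ht : s.pc t = .entrySpin) (hp : s.pred t = some w)
    (hg : s.Grant w = s.lk t) : s'.pc t = .crit := by
  cases h <;> simp_all

theorem grant_or_inCS (hi : Invariant s) (h : Step u s s') (hg : s.Grant w = some L) :
    s'.Grant w = some L ∨ inCS s' u L := by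
  cases h <;> grind [inCS, Function.update_apply, hi.grant]

theorem entrySpin_of_next_entrySpin (h : Step u s s') (ht : s'.pc t = .entrySpin)
    (hr : s.pc t ≠ .remainder) :
    s.pc t = .entrySpin ∧ s.lk t = s'.lk t ∧ s.pred t = s'.pred t := by
  cases h <;> grind [Function.update_apply]

theorem tail_eq_pred_of_remainder (h : Step u s s') (hr : s.pc t = .remainder)
    (ht : s'.pc t ≠ .remainder) (hl : s'.lk t = some L) : s.Tail L = s'.pred t := by
  cases h <;> grind [Function.update_apply]

theorem exitDoor_of_exitCAS (hi : Invariant s) (h : Step w s s') (hw : s.pc w = .exitCAS)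
    (ht : s.pc t = .entrySpin) (hp : s.pred t = some w) :
    s'.pc w = .exitDoor ∧ s'.lk w = s.lk w := by
  cases h <;> grind [Function.update_apply, hi.wait_tail, hi.wait_pred]

theorem grant_of_exitDoor (h : Step w s s') (hw : s.pc w = .exitDoor) :
    s'.Grant w = s.lk w := by
  cases h <;> simp_all

end Step

variable [Fintype Thread]

/-- For `t` busy at time `n`, the time of its last doorstep before `n`. -/
def lastRemainder (E : Execution Thread Lock) (t : Thread) (n : ℕ) : ℕ :=
  Nat.findGreatest (fun k => (E.states k).pc t = .remainder) n

def IdleFrom (E : Execution Thread Lock) (L : Lock) (n : ℕ) : Prop :=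
  ∀ m t, n ≤ m → ¬ inCS (E.states m) t L

namespace Execution

variable (E : Execution Thread Lock) {t w : Thread} {n : ℕ} {L : Lock}

theorem invariant (n : ℕ) : Invariant (E.states n) := by
  induction n with
  | zero => rw [E.init]; exact Invariant.init
  | succ n ih => exact ih.step (E.steps n)

theorem local_eq_of_not_sched {m : ℕ} (hnm : n ≤ m) (hs : ∀ i, n ≤ i → i < m → E.sched i ≠ w) :
    (E.states m).pc w = (E.states n).pc w ∧ (E.states m).lk w = (E.states n).lk w := by
  induction m, hnm using Nat.le_induction with
  | base => exact ⟨rfl, rfl⟩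
  | succ m hnm ih =>
    obtain ⟨hpc, hlk⟩ := ih fun i hi him => hs i hi (by omega)
    obtain ⟨hpc', hlk', -⟩ := (E.steps m).local_of_ne fun h => hs m hnm (by omega) h.symm
    exact ⟨hpc'.trans hpc, hlk'.trans hlk⟩

theorem exists_sched_local_eq (hw : (E.states n).pc w ≠ .remainder) :
    ∃ m, n ≤ m ∧ E.sched m = w ∧ (E.states m).pc w = (E.states n).pc w ∧
      (E.states m).lk w = (E.states n).lk w := by
  have hex := E.fair n w hw
  obtain ⟨hnm, hsched⟩ := Nat.find_spec hex
  exact ⟨_, hnm, hsched,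
    E.local_eq_of_not_sched hnm fun i hi him h => Nat.find_min hex him ⟨hi, h⟩⟩

theorem pc_lastRemainder : (E.states (lastRemainder E t n)).pc t = .remainder :=
  Nat.findGreatest_spec (P := fun k => (E.states k).pc t = .remainder) (Nat.zero_le n)
    (by rw [E.init]; rfl)

theorem pc_ne_remainder_of_lastRemainder_lt {j : ℕ} (hj : lastRemainder E t n < j)
    (hjn : j ≤ n) : (E.states j).pc t ≠ .remainder :=
  Nat.findGreatest_is_greatest hj hjn

theorem lastRemainder_lt (ht : (E.states n).pc t ≠ .remainder) : lastRemainder E t n < n :=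
  lt_of_le_of_ne (Nat.findGreatest_le n) fun h => ht (h ▸ E.pc_lastRemainder)

theorem entrySpin_of_lastRemainder_lt (ht : (E.states n).pc t = .entrySpin) {j : ℕ}
    (hj : lastRemainder E t n < j) (hjn : j ≤ n) :
    (E.states j).pc t = .entrySpin ∧ (E.states j).lk t = (E.states n).lk t ∧
      (E.states j).pred t = (E.states n).pred t := by
  refine Nat.decreasingInduction' (fun k hkn hjk ⟨hpc, hlk, hpred⟩ => ?_) hjn ⟨ht, rfl, rfl⟩
  obtain ⟨hpc', hlk', hpred'⟩ := (E.steps k).entrySpin_of_next_entrySpin hpc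
    (E.pc_ne_remainder_of_lastRemainder_lt (by omega) hkn.le)
  exact ⟨hpc', hlk'.trans hlk, hpred'.trans hpred⟩

theorem lastRemainder_lt_of_pred (ht : spinningEntryFor E n t w L) :
    lastRemainder E w n < lastRemainder E t n := by
  obtain ⟨hpc, hpred, hlk⟩ := ht
  set k := lastRemainder E t n
  have hkn : k < n := E.lastRemainder_lt (by rw [hpc]; simp)
  obtain ⟨hpc', hlk', hpred'⟩ := E.entrySpin_of_lastRemainder_lt hpc (Nat.lt_succ_self k) hkn
  have hw : ∀ j, k ≤ j → j ≤ n → (E.states j).pc w ≠ .remainder := by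
    intro j hkj hjn
    obtain rfl | hkj := hkj.eq_or_lt
    · have htail := (E.steps k).tail_eq_pred_of_remainder E.pc_lastRemainder (by rw [hpc']; simp)
        (hlk'.trans hlk)
      exact ((E.invariant k).tail L w (by rw [htail, hpred', hpred])).1
    · obtain ⟨hpcj, -, hpredj⟩ := E.entrySpin_of_lastRemainder_lt hpc hkj hjn
      exact ((E.invariant j).wait_pred t w hpcj (hpredj.trans hpred)).1
  by_contra! hle
  exact hw _ hle (Nat.findGreatest_le n) E.pc_lastRemainder

end Execution

namespace IdleFrom

variable {E : Execution Thread Lock} {L : Lock} {n : ℕ} {t w : Thread}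

theorem spinningEntryFor_of_le (hE : IdleFrom E L n) (ht : spinningEntryFor E n t w L) {m : ℕ}
    (hm : n ≤ m) : spinningEntryFor E m t w L := by
  induction m, hm using Nat.le_induction with
  | base => exact ht
  | succ m hm ih =>
    obtain ⟨hpc, hpred, hlk⟩ := ih
    by_cases hs : E.sched m = t
    · have hst := E.steps m
      rw [hs] at hst
      obtain ⟨hlk', ⟨hpc', hpred'⟩ | hcrit⟩ := hst.entrySpin_or_crit hpc
      · exact ⟨hpc', hpred'.trans hpred, hlk'.trans hlk⟩
      · exact absurd ⟨hcrit, hlk'.trans hlk⟩ (hE (m + 1) t (by omega))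
    · obtain ⟨hpc', hlk', hpred'⟩ := (E.steps m).local_of_ne (Ne.symm hs)
      exact ⟨hpc'.trans hpc, hpred'.trans hpred, hlk'.trans hlk⟩

theorem grant_persists (hE : IdleFrom E L n) {m m' : ℕ} (hm : n ≤ m) (hmm' : m ≤ m')
    (hg : (E.states m).Grant w = some L) : (E.states m').Grant w = some L := by
  induction m', hmm' using Nat.le_induction with
  | base => exact hg
  | succ m' hmm' ih =>
    exact ((E.steps m').grant_or_inCS (E.invariant m') ih).resolve_right (hE _ _ (by omega))

theorem grant_ne (hE : IdleFrom E L n) (ht : spinningEntryFor E n t w L) {m : ℕ}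
    (hm : n ≤ m) : (E.states m).Grant w ≠ some L := by
  intro hg
  obtain ⟨m', hmm', hs⟩ := E.fair m t (by rw [(hE.spinningEntryFor_of_le ht hm).1]; simp)
  obtain ⟨hpc, hpred, hlk⟩ := hE.spinningEntryFor_of_le ht (hm.trans hmm')
  have hst := E.steps m'
  rw [hs] at hst
  have hcrit := hst.crit_of_grant hpc hpred (by rw [hlk]; exact hE.grant_persists hm hmm' hg)
  exact hE (m' + 1) t (by omega) ⟨hcrit, (hst.entrySpin_or_crit hpc).1.trans hlk⟩

theorem not_exitDoor (hE : IdleFrom E L n) (ht : spinningEntryFor E n t w L) {m : ℕ}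
    (hm : n ≤ m) (hw : (E.states m).pc w = .exitDoor) (hl : (E.states m).lk w = some L) :
    False := by
  obtain ⟨m', hmm', hs, hpc, hlk⟩ := E.exists_sched_local_eq (by rw [hw]; simp)
  have hst := E.steps m'
  rw [hs] at hst
  exact hE.grant_ne ht (m := m' + 1) (by omega)
    ((hst.grant_of_exitDoor (hpc.trans hw)).trans (hlk.trans hl))

theorem not_exitCAS (hE : IdleFrom E L n) (ht : spinningEntryFor E n t w L)
    (hw : (E.states n).pc w = .exitCAS) (hl : (E.states n).lk w = some L) : False := by
  obtain ⟨m, hm, hs, hpc, hlk⟩ := E.exists_sched_local_eq (by rw [hw]; simp)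
  obtain ⟨hpct, hpredt, -⟩ := hE.spinningEntryFor_of_le ht hm
  have hst := E.steps m
  rw [hs] at hst
  obtain ⟨hpc', hlk'⟩ := hst.exitDoor_of_exitCAS (E.invariant m) (hpc.trans hw) hpct hpredt
  exact hE.not_exitDoor ht (m := m + 1) (by omega) hpc' (hlk'.trans (hlk.trans hl))

theorem not_exitSpin (hE : IdleFrom E L n) (ht : spinningEntryFor E n t w L)
    (hw : (E.states n).pc w = .exitSpin) (hl : (E.states n).lk w = some L) : False := by
  have hi := E.invariant n
  cases hg : (E.states n).Grant w with
  | none => exact hi.exit_grant w t hw hg ht.1 ht.2.1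
  | some l =>
    have hl' : some l = some L := (hi.grant w l hg).2.symm.trans hl
    exact hE.grant_ne ht le_rfl (hg.trans hl')

theorem not_inEntry (hE : IdleFrom E L n) (ht : inEntry (E.states n) t L) : False := by
  induction hk : lastRemainder E t n using Nat.strong_induction_on generalizing t with
  | _ k ih =>
    have hi := E.invariant n
    obtain ⟨w, hpred⟩ := Option.ne_none_iff_exists'.mp (hi.pred_ne_none t ht.1)
    have hspin : spinningEntryFor E n t w L := ⟨ht.1, hpred, ht.2⟩
    obtain ⟨hw, hlk⟩ := hi.wait_pred t w ht.1 hpred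
    rw [ht.2] at hlk
    cases hpc : (E.states n).pc w with
    | remainder => exact hw hpc
    | entrySpin => exact ih _ (hk ▸ E.lastRemainder_lt_of_pred hspin) ⟨hpc, hlk⟩ rfl
    | crit => exact hE n w le_rfl ⟨hpc, hlk⟩
    | exitCAS => exact hE.not_exitCAS hspin hpc hlk
    | exitDoor => exact hE.not_exitDoor hspin le_rfl hpc hlk
    | exitSpin => exact hE.not_exitSpin hspin hpc hlk

end IdleFrom

/-- Deadlock freedom: if at some state some thread is in the entry code for a lock `L`,
then eventually some thread enters the critical section protected by `L`. -/
theorem deadlock_free {Thread Lock : Type} [DecidableEq Thread] [DecidableEq Lock]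
    [Fintype Thread] (E : Execution Thread Lock) (L : Lock) (T : Thread) (n : ℕ)
    (h : inEntry (E.states n) T L) :
    ∃ (m : ℕ) (T' : Thread), n ≤ m ∧ inCS (E.states m) T' L := by
  by_contra! hidle
  exact IdleFrom.not_inEntry hidle h

end Hemlock
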